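/- arXiv:2507.08194 — 6 statements merged into one kernel-verified Lean document; each statement's English description precedes it below -/
import Mathlib

section
/- Let M = (E, I) be a matroid and for S ⊆ E let α(S) be the smallest integer ℓ such that a uniformly random ℓ-element subset of S is independent with probability at most 1/2. Then for any integer d > 1, a uniformly random subset of S of cardinality d·α(S) is dependent with probability at least 1 − 2^{−d}. -/
open Finset

/-!
Independence is inherited by subsets, so the probability `p k` that a uniformly random `k`-subset
of `S` is independent is submultiplicative: draw uniform `a`- and `b`-subsets `A`, `B`
independently and extend `A ∪ B` to a uniformly random `(a + b)`-subset `T ⊇ A ∪ B`. Then `T` is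
a uniformly random `(a + b)`-subset of `S`, and if `T` is independent then so are `A` and `B`.
Hence `p (d * a) ≤ p a ^ d ≤ 2⁻ᵈ`.
-/

namespace Finset

variable {α β : Type*}

-- Under `open Classical`, `(S.powersetCard k).filter (fun T => M.Indep ↑T)` elaborates with
-- `T : Set α`, filtering the family lifted to `Finset (Set α)` through the `Finset` monad.
open Classical in
theorem card_filter_bind_pure_coe (𝒜 : Finset (Finset α)) (Q : Set α → Prop) [DecidablePred Q] :
    #{T ∈ (𝒜 >>= fun A => pure (A : Set α)) | Q T} = #(𝒜.filter fun A : Finset α => Q A) := by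
  simp only [bind_def, pure_def, sup_singleton_apply, filter_image]
  exact card_image_of_injective _ coe_injective

theorem card_filter_superset_powersetCard [DecidableEq α] {S U : Finset α} (hUS : U ⊆ S)
    {k : ℕ} (hUk : #U ≤ k) :
    #{T ∈ S.powersetCard k | U ⊆ T} = (#S - #U).choose (k - #U) := by
  rw [← card_sdiff_of_subset hUS, ← card_powersetCard]
  refine card_nbij' (· \ U) (· ∪ U) ?_ ?_ ?_ ?_
  · intro T hT
    simp only [coe_filter, mem_powersetCard, Set.mem_ofPred_eq] at hT
    simp only [mem_coe, mem_powersetCard]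
    exact ⟨sdiff_subset_sdiff hT.1.1 le_rfl, by rw [card_sdiff_of_subset hT.2, hT.1.2]⟩
  · intro V hV
    simp only [mem_coe, mem_powersetCard] at hV
    have hVU : Disjoint V U := disjoint_of_subset_left hV.1 sdiff_disjoint
    simp only [coe_filter, mem_powersetCard, Set.mem_ofPred_eq]
    refine ⟨⟨union_subset (hV.1.trans sdiff_subset) hUS, ?_⟩, subset_union_right⟩
    rw [card_union_of_disjoint hVU, hV.2, Nat.sub_add_cancel hUk]
  · intro T hT
    simp only [coe_filter, Set.mem_ofPred_eq] at hT
    exact sdiff_union_of_subset hT.2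
  · intro V hV
    simp only [mem_coe, mem_powersetCard] at hV
    exact union_sdiff_cancel_right (disjoint_of_subset_left hV.1 sdiff_disjoint)

section PairUnionSum

variable (a b : ℕ) (g : ℕ → ℝ)

def pairUnionSum [DecidableEq α] (T : Finset α) : ℝ :=
  ∑ p ∈ T.powersetCard a ×ˢ T.powersetCard b, g #(p.1 ∪ p.2)

theorem pairUnionSum_map [DecidableEq α] [DecidableEq β] (f : α ↪ β) (T : Finset α) :
    pairUnionSum a b g (T.map f) = pairUnionSum a b g T := by
  simp [pairUnionSum, sum_product, powersetCard_map, ← map_union]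

theorem pairUnionSum_eq_univ_fin [DecidableEq α] (T : Finset α) :
    pairUnionSum a b g T = pairUnionSum a b g (univ : Finset (Fin #T)) := by
  have hT : (univ : Finset (Fin #T)).map (T.equivFin.symm.toEmbedding.trans (.subtype _)) = T := by
    rw [← map_map, univ_map_equiv_to_embedding, univ_eq_attach, attach_map_val]
  rw [← pairUnionSum_map a b g (β := α) _ univ, hT]

theorem pairUnionSum_eq_of_card_eq [DecidableEq α] {T U : Finset α} (h : #T = #U) :
    pairUnionSum a b g T = pairUnionSum a b g U := by
  rw [pairUnionSum_eq_univ_fin, pairUnionSum_eq_univ_fin a b g U]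
  congr!

end PairUnionSum

theorem filter_union_subset_product_powersetCard [DecidableEq α] {S T : Finset α} (hTS : T ⊆ S)
    (a b : ℕ) :
    {p ∈ S.powersetCard a ×ˢ S.powersetCard b | p.1 ∪ p.2 ⊆ T} =
      T.powersetCard a ×ˢ T.powersetCard b := by
  ext ⟨A, B⟩
  simp only [mem_filter, mem_product, mem_powersetCard, union_subset_iff]
  constructor
  · rintro ⟨⟨⟨-, hA⟩, -, hB⟩, hAT, hBT⟩
    exact ⟨⟨hAT, hA⟩, hBT, hB⟩
  · rintro ⟨⟨hAT, hA⟩, hBT, hB⟩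
    exact ⟨⟨⟨hAT.trans hTS, hA⟩, hBT.trans hTS, hB⟩, hAT, hBT⟩

theorem filter_union_subset_product_filter [DecidableEq α] {P : Finset α → Prop} [DecidablePred P]
    (hP : ∀ ⦃T U⦄, U ⊆ T → P T → P U) {T : Finset α} (hT : P T) (𝒜 ℬ : Finset (Finset α)) :
    {p ∈ 𝒜 ×ˢ ℬ | p.1 ∪ p.2 ⊆ T} = {p ∈ {A ∈ 𝒜 | P A} ×ˢ {B ∈ ℬ | P B} | p.1 ∪ p.2 ⊆ T} := by
  ext ⟨A, B⟩
  simp only [mem_filter, mem_product, union_subset_iff]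
  constructor
  · rintro ⟨⟨hA, hB⟩, hAT, hBT⟩
    exact ⟨⟨⟨hA, hP hAT hT⟩, hB, hP hBT hT⟩, hAT, hBT⟩
  · rintro ⟨⟨⟨hA, -⟩, hB, -⟩, hAT, hBT⟩
    exact ⟨⟨hA, hB⟩, hAT, hBT⟩

-- The weight of `(A, B)` is spread uniformly over the `(a + b)`-subsets of `S` containing `A ∪ B`.
theorem sum_powersetCard_sum_union_subset [DecidableEq α] {S : Finset α} {a b : ℕ}
    (hab : a + b ≤ #S) {𝒜 ℬ : Finset (Finset α)} (h𝒜 : 𝒜 ⊆ S.powersetCard a)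
    (hℬ : ℬ ⊆ S.powersetCard b) :
    ∑ T ∈ S.powersetCard (a + b), ∑ p ∈ 𝒜 ×ˢ ℬ with p.1 ∪ p.2 ⊆ T,
        ((#S - #(p.1 ∪ p.2)).choose (a + b - #(p.1 ∪ p.2)) : ℝ)⁻¹ = #𝒜 * #ℬ := by
  simp_rw [sum_filter]
  rw [sum_comm, ← Nat.cast_mul, ← card_product, cast_card]
  refine sum_congr rfl fun p hp => ?_
  obtain ⟨hA, hB⟩ := mem_product.1 hp
  obtain ⟨hAS, hAcard⟩ := mem_powersetCard.1 (h𝒜 hA)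
  obtain ⟨hBS, hBcard⟩ := mem_powersetCard.1 (hℬ hB)
  have hcard : #(p.1 ∪ p.2) ≤ a + b := hAcard ▸ hBcard ▸ card_union_le _ _
  rw [← sum_filter, sum_const, nsmul_eq_mul,
    card_filter_superset_powersetCard (union_subset hAS hBS) hcard,
    mul_inv_cancel₀ (Nat.cast_ne_zero.2 (Nat.choose_pos (by omega)).ne')]

-- The total weight received by `T` does not depend on `T`: extending `A ∪ B` at random yields a
-- uniformly random `(a + b)`-subset.
theorem sum_filter_union_subset_inv_choose [DecidableEq α] {S T : Finset α} {a b : ℕ}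
    (hT : T ∈ S.powersetCard (a + b)) :
    ∑ p ∈ S.powersetCard a ×ˢ S.powersetCard b with p.1 ∪ p.2 ⊆ T,
        ((#S - #(p.1 ∪ p.2)).choose (a + b - #(p.1 ∪ p.2)) : ℝ)⁻¹ =
      #(S.powersetCard a) * #(S.powersetCard b) / #(S.powersetCard (a + b)) := by
  set w : ℕ → ℝ := fun m => ((#S - m).choose (a + b - m) : ℝ)⁻¹
  have hab : a + b ≤ #S := (mem_powersetCard.1 hT).2 ▸ card_le_card (mem_powersetCard.1 hT).1
  have hconst : ∀ T' ∈ S.powersetCard (a + b),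
      ∑ p ∈ S.powersetCard a ×ˢ S.powersetCard b with p.1 ∪ p.2 ⊆ T', w #(p.1 ∪ p.2) =
        pairUnionSum a b w T := by
    intro T' hT'
    rw [filter_union_subset_product_powersetCard (mem_powersetCard.1 hT').1]
    exact pairUnionSum_eq_of_card_eq a b w
      ((mem_powersetCard.1 hT').2.trans (mem_powersetCard.1 hT).2.symm)
  have hpos : (0 : ℝ) < #(S.powersetCard (a + b)) := by
    rw [card_powersetCard]; exact_mod_cast Nat.choose_pos hab
  rw [eq_div_iff hpos.ne', ← sum_powersetCard_sum_union_subset hab subset_rfl subset_rfl,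
    sum_congr rfl hconst, hconst T hT, sum_const, nsmul_eq_mul, mul_comm]

section Density

variable (S : Finset α) (P : Finset α → Prop) [DecidablePred P]

noncomputable def powersetCardDensity (k : ℕ) : ℝ :=
  #{T ∈ S.powersetCard k | P T} / #(S.powersetCard k)

theorem powersetCardDensity_nonneg (k : ℕ) : 0 ≤ powersetCardDensity S P k := by
  unfold powersetCardDensity; positivity

theorem powersetCardDensity_le_one (k : ℕ) : powersetCardDensity S P k ≤ 1 :=
  div_le_one_of_le₀ (by exact_mod_cast card_filter_le _ _) (by positivity)

theorem powersetCardDensity_mul_card (k : ℕ) :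
    powersetCardDensity S P k * #(S.powersetCard k) = #{T ∈ S.powersetCard k | P T} := by
  rcases eq_or_ne #(S.powersetCard k) 0 with h | h
  · rw [h, card_eq_zero.1 h, filter_empty, card_empty]; simp
  · exact div_mul_cancel₀ _ (Nat.cast_ne_zero.2 h)

variable {P}

theorem powersetCardDensity_le_half {k : ℕ}
    (h : 2 * #{T ∈ S.powersetCard k | P T} ≤ #(S.powersetCard k)) :
    powersetCardDensity S P k ≤ 1 / 2 := by
  have h' : (2 : ℝ) * #{T ∈ S.powersetCard k | P T} ≤ #(S.powersetCard k) := by exact_mod_cast h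
  exact div_le_of_le_mul₀ (Nat.cast_nonneg _) (by norm_num) (by linarith)

theorem one_sub_mul_card_le_card_filter_not {k : ℕ} {q : ℝ}
    (hq : powersetCardDensity S P k ≤ q) :
    (1 - q) * #(S.powersetCard k) ≤ #{T ∈ S.powersetCard k | ¬ P T} := by
  have hsplit : (#{T ∈ S.powersetCard k | P T} : ℝ) + #{T ∈ S.powersetCard k | ¬ P T} =
      #(S.powersetCard k) := by
    exact_mod_cast card_filter_add_card_filter_not _
  have hP : (#{T ∈ S.powersetCard k | P T} : ℝ) ≤ q * #(S.powersetCard k) := by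
    rw [← powersetCardDensity_mul_card]
    exact mul_le_mul_of_nonneg_right hq (Nat.cast_nonneg _)
  linarith

theorem powersetCardDensity_add_le_mul (hP : ∀ ⦃T U⦄, U ⊆ T → P T → P U) (a b : ℕ) :
    powersetCardDensity S P (a + b) ≤ powersetCardDensity S P a * powersetCardDensity S P b := by
  classical
  rcases lt_or_ge #S (a + b) with hab | hab
  · rw [powersetCardDensity, powersetCard_eq_empty.2 hab, filter_empty, card_empty,
      Nat.cast_zero, zero_div]
    exact mul_nonneg (powersetCardDensity_nonneg S P a) (powersetCardDensity_nonneg S P b)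
  set w : ℕ → ℝ := fun m => ((#S - m).choose (a + b - m) : ℝ)⁻¹
  have hfam : (#{T ∈ S.powersetCard (a + b) | P T} : ℝ) *
        (#(S.powersetCard a) * #(S.powersetCard b) / #(S.powersetCard (a + b))) ≤
      #{A ∈ S.powersetCard a | P A} * #{B ∈ S.powersetCard b | P B} := by
    rw [← sum_powersetCard_sum_union_subset hab (filter_subset _ _) (filter_subset _ _),
      ← nsmul_eq_mul, ← sum_const]
    calc _ = ∑ T ∈ S.powersetCard (a + b) with P T,
          ∑ p ∈ {A ∈ S.powersetCard a | P A} ×ˢ {B ∈ S.powersetCard b | P B} with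
            p.1 ∪ p.2 ⊆ T, w #(p.1 ∪ p.2) := by
          refine sum_congr rfl fun T hT => ?_
          rw [← sum_filter_union_subset_inv_choose (mem_filter.1 hT).1,
            filter_union_subset_product_filter hP (mem_filter.1 hT).2]
      _ ≤ _ := sum_le_sum_of_subset_of_nonneg (filter_subset _ _) fun _ _ _ =>
          sum_nonneg fun _ _ => by positivity
  have hpos : ∀ k ≤ #S, (0 : ℝ) < #(S.powersetCard k) := fun k hk => by
    rw [card_powersetCard]; exact_mod_cast Nat.choose_pos hk
  unfold powersetCardDensity
  rw [div_mul_div_comm, le_div_iff₀ (mul_pos (hpos a (by omega)) (hpos b (by omega)))]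
  calc _ = _ * (_ / _) := by ring
    _ ≤ _ := hfam

theorem powersetCardDensity_mul_le_pow (hP : ∀ ⦃T U⦄, U ⊆ T → P T → P U) (a d : ℕ) :
    powersetCardDensity S P (d * a) ≤ powersetCardDensity S P a ^ d := by
  induction d with
  | zero => simpa using powersetCardDensity_le_one S P 0
  | succ d ih =>
    rw [Nat.succ_mul, pow_succ]
    exact (powersetCardDensity_add_le_mul S hP _ a).trans
      (mul_le_mul_of_nonneg_right ih (powersetCardDensity_nonneg S P a))

end Density

end Finset

open Classical in
theorem stmt3_general {α : Type*} (M : Matroid α) (S : Finset α) (a : ℕ)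
    (ha : 2 * ((S.powersetCard a).filter (fun T => M.Indep ↑T)).card ≤ (S.powersetCard a).card)
    (d : ℕ) :
    (1 - (1/2 : ℝ) ^ d) * (S.powersetCard (d * a)).card ≤
      ((S.powersetCard (d * a)).filter (fun T => ¬ M.Indep ↑T)).card := by
  rw [card_filter_bind_pure_coe] at ha ⊢
  have hP : ∀ ⦃T U : Finset α⦄, U ⊆ T → M.Indep ↑T → M.Indep ↑U := fun _ _ hUT hT =>
    hT.subset (coe_subset.2 hUT)
  apply one_sub_mul_card_le_card_filter_not
  exact (powersetCardDensity_mul_le_pow S hP a d).trans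
    (pow_le_pow_left₀ (powersetCardDensity_nonneg _ _ a) (powersetCardDensity_le_half S ha) d)

open Classical in
theorem stmt3 {α : Type*} [DecidableEq α] (M : Matroid α) (S : Finset α)
    (hSE : (↑S : Set α) ⊆ M.E) (a : ℕ)
    (ha : 2 * ((S.powersetCard a).filter (fun T => M.Indep ↑T)).card ≤ (S.powersetCard a).card)
    (hmin : ∀ ℓ < a,
      2 * ((S.powersetCard ℓ).filter (fun T => M.Indep ↑T)).card > (S.powersetCard ℓ).card)
    (d : ℕ) (hd : 1 < d) :
    (1 - (1/2 : ℝ) ^ d) * (S.powersetCard (d * a)).card ≤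
      ((S.powersetCard (d * a)).filter (fun T => ¬ M.Indep ↑T)).card :=
  stmt3_general M S a ha d
end

section
/- Let M = (E, I) be a matroid and S ⊆ E with α(S) defined as the smallest ℓ such that a uniformly random ℓ-subset of S is independent with probability at most 1/2 (assume α(S) ≥ 2). Then a uniformly random subset of S of cardinality (α(S) − 1)/2 (rounded down) is independent with probability at least 1/√2. -/
/-!
Let `k = ⌊(α(S) - 1)/2⌋` and draw two independent uniform `k`-subsets `A, B` of `S`. Conditioned
on `|A ∪ B| = m`, the union `A ∪ B` is a uniform `m`-subset of `S`, and `m ≤ 2k < α(S)`, so by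
minimality of `α(S)` the union is independent with probability at least `1/2`. Independence is
closed under subsets, so `A ∪ B` independent forces `A` and `B` independent, whence
`P(A indep)² ≥ 1/2`.
-/

open Finset

namespace Finset

variable {α β : Type*} [DecidableEq α]

def coveringPairs (k : ℕ) (U : Finset α) : Finset (Finset α × Finset α) :=
  {p ∈ U.powersetCard k ×ˢ U.powersetCard k | p.1 ∪ p.2 = U}

lemma mem_coveringPairs {k : ℕ} {U : Finset α} {p : Finset α × Finset α} :
    p ∈ coveringPairs k U ↔ #p.1 = k ∧ #p.2 = k ∧ p.1 ∪ p.2 = U := by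
  simp only [coveringPairs, mem_filter, mem_product, mem_powersetCard]
  constructor
  · rintro ⟨⟨⟨-, h₁⟩, -, h₂⟩, hU⟩
    exact ⟨h₁, h₂, hU⟩
  · rintro ⟨h₁, h₂, rfl⟩
    exact ⟨⟨⟨subset_union_left, h₁⟩, subset_union_right, h₂⟩, rfl⟩

lemma coveringPairs_map [DecidableEq β] (k : ℕ) (f : β ↪ α) (s : Finset β) :
    coveringPairs k (s.map f) =
      (coveringPairs k s).map
        ((mapEmbedding f).toEmbedding.prodMap (mapEmbedding f).toEmbedding) := by
  ext ⟨A, B⟩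
  constructor
  · rw [mem_coveringPairs]
    rintro ⟨hA, hB, hU⟩
    obtain ⟨A', -, rfl⟩ := subset_map_iff.1 (hU ▸ subset_union_left : A ⊆ s.map f)
    obtain ⟨B', -, rfl⟩ := subset_map_iff.1 (hU ▸ subset_union_right : B ⊆ s.map f)
    rw [← map_union, map_inj] at hU
    rw [card_map] at hA hB
    exact mem_map.2 ⟨(A', B'), mem_coveringPairs.2 ⟨hA, hB, hU⟩, rfl⟩
  · simp only [mem_map, mem_coveringPairs]
    rintro ⟨⟨A', B'⟩, ⟨hA, hB, rfl⟩, he⟩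
    simp only [Function.Embedding.prodMap, Function.Embedding.coeFn_mk, Prod.map,
      RelEmbedding.coe_toEmbedding, mapEmbedding_apply, Prod.mk.injEq] at he
    obtain ⟨rfl, rfl⟩ := he
    exact ⟨by rw [card_map, hA], by rw [card_map, hB], by rw [map_union]⟩

lemma card_coveringPairs_of_card_eq (k : ℕ) {U : Finset α} {m : ℕ} (hU : #U = m) :
    #(coveringPairs k U) = #(coveringPairs k (univ : Finset (Fin m))) := by
  subst hU
  have : U = univ.map (U.equivFin.symm.toEmbedding.trans (.subtype (· ∈ U))) := by
    rw [← map_map, map_univ_equiv, univ_eq_attach, attach_map_val]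
  conv_lhs => rw [this, coveringPairs_map, card_map]

lemma coveringPairs_eq_empty {k : ℕ} {U : Finset α} (h : 2 * k < #U) :
    coveringPairs k U = ∅ := by
  refine eq_empty_of_forall_notMem fun p hp => ?_
  obtain ⟨h₁, h₂, rfl⟩ := mem_coveringPairs.1 hp
  have := card_union_le p.1 p.2
  omega

lemma filter_union_eq_coveringPairs {S U : Finset α} (k : ℕ) (hU : U ⊆ S) :
    {p ∈ S.powersetCard k ×ˢ S.powersetCard k | p.1 ∪ p.2 = U} = coveringPairs k U := by
  ext p
  simp only [mem_filter, mem_product, mem_powersetCard, mem_coveringPairs]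
  constructor
  · rintro ⟨⟨⟨-, h₁⟩, -, h₂⟩, hp⟩
    exact ⟨h₁, h₂, hp⟩
  · rintro ⟨h₁, h₂, rfl⟩
    exact ⟨⟨⟨subset_union_left.trans hU, h₁⟩, subset_union_right.trans hU, h₂⟩, rfl⟩

lemma card_filter_union_eq_sum (S : Finset α) (k : ℕ) (P : Finset α → Prop) [DecidablePred P] :
    #{p ∈ S.powersetCard k ×ˢ S.powersetCard k | P (p.1 ∪ p.2)} =
      ∑ m ∈ range (#S + 1),
        #(coveringPairs k (univ : Finset (Fin m))) * #{U ∈ S.powersetCard m | P U} := by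
  have hmaps : ∀ p ∈ {p ∈ S.powersetCard k ×ˢ S.powersetCard k | P (p.1 ∪ p.2)},
      p.1 ∪ p.2 ∈ {U ∈ S.powerset | P U} := by
    simp only [mem_filter, mem_product, mem_powersetCard, mem_powerset]
    exact fun p ⟨⟨⟨h₁, _⟩, h₂, _⟩, hP⟩ => ⟨union_subset h₁ h₂, hP⟩
  rw [card_eq_sum_card_fiberwise hmaps, sum_filter, sum_powerset]
  refine sum_congr rfl fun m _ => ?_
  rw [← sum_filter, mul_comm, ← smul_eq_mul, ← sum_const]
  refine sum_congr rfl fun U hU => ?_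
  obtain ⟨hUS, hUm⟩ := mem_powersetCard.1 (mem_filter.1 hU).1
  rw [filter_filter, ← card_coveringPairs_of_card_eq k hUm,
    ← filter_union_eq_coveringPairs k hUS]
  exact congrArg card <| filter_congr fun p _ =>
    and_iff_right_of_imp fun h => h ▸ (mem_filter.1 hU).2

lemma sq_card_powersetCard_le_two_mul_card_filter_union (S : Finset α) (k : ℕ)
    (P : Finset α → Prop) [DecidablePred P]
    (hP : ∀ m ≤ 2 * k, #(S.powersetCard m) ≤ 2 * #{U ∈ S.powersetCard m | P U}) :
    #(S.powersetCard k) ^ 2 ≤ 2 * #{p ∈ S.powersetCard k ×ˢ S.powersetCard k | P (p.1 ∪ p.2)} := by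
  calc #(S.powersetCard k) ^ 2
      = ∑ m ∈ range (#S + 1),
          #(coveringPairs k (univ : Finset (Fin m))) * #(S.powersetCard m) := by
        simpa [sq] using card_filter_union_eq_sum S k fun _ => True
    _ ≤ ∑ m ∈ range (#S + 1),
          2 * (#(coveringPairs k (univ : Finset (Fin m))) * #{U ∈ S.powersetCard m | P U}) := by
        refine sum_le_sum fun m _ => ?_
        by_cases hm : m ≤ 2 * k
        · rw [mul_left_comm]
          exact Nat.mul_le_mul_left _ (hP m hm)
        · rw [coveringPairs_eq_empty (by simpa using hm)]
          simp
    _ = _ := by rw [← mul_sum, card_filter_union_eq_sum]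

end Finset

lemma Finset.sq_card_powersetCard_le_two_mul_sq_card_filter {α : Type*} (S : Finset α) (k : ℕ)
    (P : Finset α → Prop) [DecidablePred P] (hdown : ∀ ⦃A B⦄, A ⊆ B → P B → P A)
    (hP : ∀ m ≤ 2 * k, #(S.powersetCard m) ≤ 2 * #{U ∈ S.powersetCard m | P U}) :
    #(S.powersetCard k) ^ 2 ≤ 2 * #{T ∈ S.powersetCard k | P T} ^ 2 := by
  classical
  refine (sq_card_powersetCard_le_two_mul_card_filter_union S k P hP).trans ?_
  rw [sq, ← card_product]
  refine Nat.mul_le_mul_left 2 (card_le_card fun p hp => ?_)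
  simp only [mem_filter, mem_product] at hp ⊢
  exact ⟨⟨hp.1.1, hdown subset_union_left hp.2⟩, hp.1.2, hdown subset_union_right hp.2⟩

lemma div_sqrt_two_le_of_sq_le {x y : ℝ} (hy : 0 ≤ y) (h : x ^ 2 ≤ 2 * y ^ 2) : x / √2 ≤ y := by
  rw [div_le_iff₀ (by positivity)]
  have hsq : x ^ 2 ≤ (y * √2) ^ 2 := by rwa [mul_pow, Real.sq_sqrt zero_le_two, mul_comm]
  exact (abs_le_of_sq_le_sq' hsq (by positivity)).2

-- With `s : Finset (Finset α)`, the filter `{T ∈ s | M.Indep ↑T}` elaborates by lifting `s` to a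
-- `Finset (Set α)` through the `Finset` monad; this lemma undoes that lift.
open Classical in
lemma Finset.card_filter_bind_pure_coe_s4 {α : Type*} (F : Finset (Finset α)) (P : Set α → Prop) :
    #{T ∈ F >>= fun T => pure (T : Set α) | P T} = #(F.filter fun T : Finset α => P T) := by
  simp only [bind_def, pure_def, sup_singleton_apply, filter_image]
  exact card_image_of_injective _ coe_injective

open Classical in
theorem stmt4_general {α : Type*} (M : Matroid α) (S : Finset α)
    (a : ℕ) (ha2 : 2 ≤ a)
    (hmin : ∀ ℓ < a,
      2 * ((S.powersetCard ℓ).filter (fun T => M.Indep ↑T)).card > (S.powersetCard ℓ).card) :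
    ((S.powersetCard ((a - 1) / 2)).card : ℝ) / Real.sqrt 2 ≤
      ((S.powersetCard ((a - 1) / 2)).filter (fun T => M.Indep ↑T)).card := by
  simp only [card_filter_bind_pure_coe_s4] at hmin ⊢
  have key := sq_card_powersetCard_le_two_mul_sq_card_filter S ((a - 1) / 2)
    (fun T => M.Indep (T : Set α)) (fun A B hAB hB => hB.subset (coe_subset.2 hAB))
    (fun m hm => (hmin m (by omega)).le)
  exact div_sqrt_two_le_of_sq_le (Nat.cast_nonneg _) (by exact_mod_cast key)

open Classical in
theorem stmt4 {α : Type*} [DecidableEq α] (M : Matroid α) (S : Finset α)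
    (hSE : (↑S : Set α) ⊆ M.E) (a : ℕ) (ha2 : 2 ≤ a)
    (ha : 2 * ((S.powersetCard a).filter (fun T => M.Indep ↑T)).card ≤ (S.powersetCard a).card)
    (hmin : ∀ ℓ < a,
      2 * ((S.powersetCard ℓ).filter (fun T => M.Indep ↑T)).card > (S.powersetCard ℓ).card) :
    ((S.powersetCard ((a - 1) / 2)).card : ℝ) / Real.sqrt 2 ≤
      ((S.powersetCard ((a - 1) / 2)).filter (fun T => M.Indep ↑T)).card :=
  stmt4_general M S a ha2 hmin
end

section
/- Let M = (E, I) be a matroid of rank r with n = |E| and let d be a positive integer. Then there exists a set T ⊆ E with |T| ≤ r·d such that the restriction of M to E \ T is either empty or satisfies: for every subset S ⊆ E \ T with rank(S) < rank(E \ T), we have (|E \ T| − |S|) / (rank(E \ T) − rank(S)) ≥ d. -/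
/-
While some `S ⊆ F` has `|F| - |S| < d · (r F - r S)`, replace `F` by `S`. Each such step deletes
fewer than `d` elements per unit of rank lost, so the deleted elements number at most `d · r F`;
the process stops, since `F` shrinks, at a set all of whose lower-rank subsets satisfy the density
bound.
-/

/-- The rank of a set in a matroid: the maximum cardinality of an independent subset. -/
noncomputable def mrank {α : Type*} (M : Matroid α) (S : Set α) : ℕ :=
  sSup {n | ∃ I : Set α, M.Indep I ∧ I ⊆ S ∧ I.ncard = n}

/-- `κ(F) ≥ d`, with `r` in the role of the rank function. -/
def KappaAtLeast {α : Type*} (r : Set α → ℕ) (d : ℕ) (F : Set α) : Prop :=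
  ∀ S ⊆ F, r S < r F → (d : ℝ) ≤ ((F.ncard : ℝ) - (S.ncard : ℝ)) / ((r F : ℝ) - (r S : ℝ))

section

variable {α : Type*} {r : Set α → ℕ} {d : ℕ} {F : Set α}

lemma KappaAtLeast.exists_violator (hF : F.Finite) (hκ : ¬KappaAtLeast r d F) :
    ∃ S ⊂ F, r S < r F ∧ F.ncard - S.ncard < d * (r F - r S) := by
  simp only [KappaAtLeast, not_forall, not_le, exists_prop] at hκ
  obtain ⟨S, hSF, hrank, hdensity⟩ := hκ
  have hSF' : S ⊂ F := hSF.ssubset_of_ne (by rintro rfl; exact hrank.false)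
  have hcard : S.ncard ≤ F.ncard := Set.ncard_le_ncard hSF hF
  refine ⟨S, hSF', hrank, ?_⟩
  rw [div_lt_iff₀ (by rw [sub_pos]; exact_mod_cast hrank)] at hdensity
  rw [← Nat.cast_sub hcard, ← Nat.cast_sub hrank.le] at hdensity
  exact_mod_cast hdensity

lemma exists_ncard_le_kappaAtLeast_sdiff (r : Set α → ℕ) (d : ℕ) (hF : F.Finite) :
    ∃ T ⊆ F, T.ncard ≤ r F * d ∧ KappaAtLeast r d (F \ T) := by
  induction h : F.ncard using Nat.strong_induction_on generalizing F with
  | _ n ih =>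
  by_cases hκ : KappaAtLeast r d F
  · exact ⟨∅, Set.empty_subset F, by simp, by simpa using hκ⟩
  obtain ⟨S, hSF, hrank, hdensity⟩ := KappaAtLeast.exists_violator hF hκ
  obtain ⟨T, hTS, hT, hκT⟩ :=
    ih S.ncard (h ▸ Set.ncard_lt_ncard hSF hF) (hF.subset hSF.subset) rfl
  have hrest : F \ (F \ S ∪ T) = S \ T := by
    ext x
    have : x ∈ S → x ∈ F := fun hx => hSF.subset hx
    simp only [Set.mem_sdiff, Set.mem_union]
    tauto
  refine ⟨F \ S ∪ T, Set.union_subset Set.sdiff_subset (hTS.trans hSF.subset), ?_, hrest ▸ hκT⟩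
  have hcard := Set.ncard_union_le (F \ S) T
  rw [Set.ncard_sdiff hSF.subset (hF.subset hSF.subset)] at hcard
  have hsplit : d * (r F - r S) + d * r S = d * r F := by
    rw [← Nat.mul_add, Nat.sub_add_cancel hrank.le]
  linarith

end

theorem stmt7_general {α : Type*} [Fintype α] (M : Matroid α) (d : ℕ) :
    ∃ T ⊆ M.E, T.ncard ≤ mrank M M.E * d ∧
      (M.E \ T = ∅ ∨
        ∀ S ⊆ M.E \ T, mrank M S < mrank M (M.E \ T) →
          (d : ℝ) ≤ (((M.E \ T).ncard : ℝ) - (S.ncard : ℝ)) /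
            ((mrank M (M.E \ T) : ℝ) - (mrank M S : ℝ))) := by
  obtain ⟨T, hTE, hT, hκ⟩ := exists_ncard_le_kappaAtLeast_sdiff (mrank M) d M.E.toFinite
  exact ⟨T, hTE, hT, Or.inr hκ⟩

theorem stmt7 {α : Type*} [Fintype α] (M : Matroid α) (d : ℕ) (hd : 0 < d) :
    ∃ T ⊆ M.E, T.ncard ≤ mrank M M.E * d ∧
      (M.E \ T = ∅ ∨
        ∀ S ⊆ M.E \ T, mrank M S < mrank M (M.E \ T) →
          (d : ℝ) ≤ (((M.E \ T).ncard : ℝ) - (S.ncard : ℝ)) /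
            ((mrank M (M.E \ T) : ℝ) - (mrank M S : ℝ))) :=
  stmt7_general M d
end

section
/- Let X ~ Bin(n, p) with p ≤ 1/2 and Var[X] = np(1−p) ≥ 1. Then Pr[X ≥ E[X] + (1/5)·√(Var[X])] ≥ 1/108 and Pr[X ≤ E[X] − (1/5)·√(Var[X])] ≥ 1/108. -/
/-!
Write `Y = X - np`, `V = np(1-p)` and `σ = √V`. The binomial fourth central moment is
`3V² + V(1 - 6p(1-p)) ≤ 4V²` once `V ≥ 1`. Interpolating the second moment between the first and
the fourth (two Cauchy–Schwarz steps) gives `E|Y| ≥ σ/2`; as `E Y = 0`, `E Y⁺ = E|Y|/2 ≥ σ/4`, so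
`S = E[Y; Y ≥ σ/5] ≥ σ/20`. Hölder on the event `{Y ≥ σ/5}` of probability `P` gives
`S⁴ ≤ P³ E Y⁴ ≤ 4P³V²`, whence `P³ ≥ 1/640000 > 108⁻³`. The lower tail is the same argument
applied to `-Y`.
-/

open Finset

section WeightedSums

variable {ι : Type*} {s : Finset ι} {w : ι → ℝ}

theorem sq_sum_mul_le_of_sq_le_mul (hw : ∀ i ∈ s, 0 ≤ w i) {a b c : ι → ℝ}
    (hb : ∀ i ∈ s, 0 ≤ b i) (hc : ∀ i ∈ s, 0 ≤ c i) (habc : ∀ i ∈ s, a i ^ 2 ≤ b i * c i) :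
    (∑ i ∈ s, w i * a i) ^ 2 ≤ (∑ i ∈ s, w i * b i) * ∑ i ∈ s, w i * c i :=
  sum_sq_le_sum_mul_sum_of_sq_le_mul s (fun i hi => mul_nonneg (hw i hi) (hb i hi))
    (fun i hi => mul_nonneg (hw i hi) (hc i hi)) fun i hi => by
      nlinarith [mul_le_mul_of_nonneg_left (habc i hi) (sq_nonneg (w i))]

theorem sum_mul_sq_pow_three_le (hw : ∀ i ∈ s, 0 ≤ w i) (v : ι → ℝ) :
    (∑ i ∈ s, w i * v i ^ 2) ^ 3 ≤ (∑ i ∈ s, w i * |v i|) ^ 2 * ∑ i ∈ s, w i * v i ^ 4 := by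
  set V := ∑ i ∈ s, w i * v i ^ 2
  set M₁ := ∑ i ∈ s, w i * |v i|
  set M₃ := ∑ i ∈ s, w i * |v i| ^ 3
  set M₄ := ∑ i ∈ s, w i * v i ^ 4
  have hV : 0 ≤ V := sum_nonneg fun i hi => mul_nonneg (hw i hi) (sq_nonneg _)
  have hV_sq : V ^ 2 ≤ M₁ * M₃ :=
    sq_sum_mul_le_of_sq_le_mul hw (fun i _ => abs_nonneg _) (fun i _ => by positivity)
      fun i _ => le_of_eq (by rw [← sq_abs (v i)]; ring)
  have hM₃_sq : M₃ ^ 2 ≤ V * M₄ :=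
    sq_sum_mul_le_of_sq_le_mul hw (fun i _ => sq_nonneg _) (fun i _ => by positivity)
      fun i _ => le_of_eq (by
        linear_combination (|v i| ^ 4 + |v i| ^ 2 * v i ^ 2 + v i ^ 4) * sq_abs (v i))
  rcases hV.eq_or_lt with hV0 | hVpos
  · rw [← hV0, zero_pow three_ne_zero]
    exact mul_nonneg (sq_nonneg _) (sum_nonneg fun i hi => mul_nonneg (hw i hi) (by positivity))
  refine le_of_mul_le_mul_left ?_ hVpos
  calc V * V ^ 3 = (V ^ 2) ^ 2 := by ring
    _ ≤ (M₁ * M₃) ^ 2 := pow_le_pow_left₀ (sq_nonneg V) hV_sq 2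
    _ = M₁ ^ 2 * M₃ ^ 2 := by ring
    _ ≤ M₁ ^ 2 * (V * M₄) := mul_le_mul_of_nonneg_left hM₃_sq (sq_nonneg M₁)
    _ = V * (M₁ ^ 2 * M₄) := by ring

theorem sum_mul_pow_four_le (hw : ∀ i ∈ s, 0 ≤ w i) (v : ι → ℝ) :
    (∑ i ∈ s, w i * v i) ^ 4 ≤ (∑ i ∈ s, w i) ^ 3 * ∑ i ∈ s, w i * v i ^ 4 := by
  set S := ∑ i ∈ s, w i * v i
  set P := ∑ i ∈ s, w i
  set Q := ∑ i ∈ s, w i * v i ^ 2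
  have hP : P = ∑ i ∈ s, w i * 1 := by simp only [mul_one, P]
  have hS_sq : S ^ 2 ≤ P * Q := hP ▸
    sq_sum_mul_le_of_sq_le_mul hw (fun i _ => zero_le_one) (fun i _ => sq_nonneg _)
      fun i _ => (one_mul _).ge
  have hQ_sq : Q ^ 2 ≤ P * ∑ i ∈ s, w i * v i ^ 4 := hP ▸
    sq_sum_mul_le_of_sq_le_mul hw (fun i _ => zero_le_one) (fun i _ => by positivity)
      fun i _ => le_of_eq (by ring)
  have hP0 : 0 ≤ P := sum_nonneg hw
  calc S ^ 4 = (S ^ 2) ^ 2 := by ring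
    _ ≤ (P * Q) ^ 2 := pow_le_pow_left₀ (sq_nonneg S) hS_sq 2
    _ = P ^ 2 * Q ^ 2 := by ring
    _ ≤ P ^ 2 * (P * ∑ i ∈ s, w i * v i ^ 4) := mul_le_mul_of_nonneg_left hQ_sq (sq_nonneg P)
    _ = P ^ 3 * ∑ i ∈ s, w i * v i ^ 4 := by ring

theorem sum_mul_max_zero_eq {v : ι → ℝ} (hv : ∑ i ∈ s, w i * v i = 0) :
    ∑ i ∈ s, w i * max (v i) 0 = (∑ i ∈ s, w i * |v i|) / 2 := by
  have hmax : ∀ i ∈ s, w i * max (v i) 0 = (w i * v i + w i * |v i|) / 2 := fun i _ => by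
    rcases le_total 0 (v i) with h | h
    · rw [max_eq_left h, abs_of_nonneg h]; ring
    · rw [max_eq_right h, abs_of_nonpos h]; ring
  rw [sum_congr rfl hmax, ← sum_div, sum_add_distrib, hv, zero_add]

theorem sum_mul_max_zero_le (hw : ∀ i ∈ s, 0 ≤ w i) (v : ι → ℝ) {t : ℝ} (ht : 0 ≤ t) :
    ∑ i ∈ s, w i * max (v i) 0 ≤ t * ∑ i ∈ s, w i + ∑ i ∈ s with t ≤ v i, w i * v i := by
  rw [sum_filter, mul_sum, ← sum_add_distrib]
  refine sum_le_sum fun i hi => ?_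
  split_ifs with h
  · rw [max_eq_left (ht.trans h)]
    exact le_add_of_nonneg_left (mul_nonneg ht (hw i hi))
  · rw [add_zero, mul_comm]
    exact mul_le_mul_of_nonneg_right (max_le (not_le.mp h).le ht) (hw i hi)

theorem one_div_108_le_sum_filter_of_fourth_moment_le (hw : ∀ i ∈ s, 0 ≤ w i)
    (h₀ : ∑ i ∈ s, w i = 1) {v : ι → ℝ} (h₁ : ∑ i ∈ s, w i * v i = 0) {V : ℝ} (hV : 0 < V)
    (h₂ : ∑ i ∈ s, w i * v i ^ 2 = V) (h₄ : ∑ i ∈ s, w i * v i ^ 4 ≤ 4 * V ^ 2) :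
    1 / 108 ≤ ∑ i ∈ s with √V / 5 ≤ v i, w i := by
  set σ := √V
  have hσ : σ ^ 2 = V := Real.sq_sqrt hV.le
  have hσ0 : 0 < σ := Real.sqrt_pos.mpr hV
  set M₁ := ∑ i ∈ s, w i * |v i|
  set S := ∑ i ∈ s with σ / 5 ≤ v i, w i * v i
  set P := ∑ i ∈ s with σ / 5 ≤ v i, w i
  have hM₁ : σ / 2 ≤ M₁ := by
    have h : V ^ 2 * V ≤ V ^ 2 * (4 * M₁ ^ 2) := by
      have := (sum_mul_sq_pow_three_le hw v).trans (mul_le_mul_of_nonneg_left h₄ (sq_nonneg M₁))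
      rw [h₂] at this
      linarith
    have hM₁0 : 0 ≤ M₁ := sum_nonneg fun i hi => mul_nonneg (hw i hi) (abs_nonneg _)
    rw [← pow_le_pow_iff_left₀ (by positivity) hM₁0 two_ne_zero, div_pow, hσ]
    linarith [le_of_mul_le_mul_left h (by positivity)]
  have hS : σ / 20 ≤ S := by
    have h := sum_mul_max_zero_le hw v (t := σ / 5) (by positivity)
    rw [sum_mul_max_zero_eq h₁, h₀] at h
    linarith
  have hP : S ^ 4 ≤ P ^ 3 * (4 * V ^ 2) := by
    refine (sum_mul_pow_four_le (fun i hi => hw i (mem_filter.mp hi).1) v).trans ?_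
    refine mul_le_mul_of_nonneg_left ((sum_le_sum_of_subset_of_nonneg (filter_subset _ s)
      fun i hi _ => mul_nonneg (hw i hi) (by positivity)).trans h₄) ?_
    exact pow_nonneg (sum_nonneg fun i hi => hw i (mem_filter.mp hi).1) 3
  have hV_sq : V ^ 2 / 160000 ≤ P ^ 3 * (4 * V ^ 2) :=
    calc V ^ 2 / 160000 = (σ / 20) ^ 4 := by rw [← hσ]; ring
      _ ≤ S ^ 4 := pow_le_pow_left₀ (by positivity) hS 4
      _ ≤ P ^ 3 * (4 * V ^ 2) := hP
  have hP3 : (1 / 108) ^ 3 < P ^ 3 := by nlinarith [pow_pos hV 2]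
  exact (lt_of_pow_lt_pow_left₀ 3 (sum_nonneg fun i hi => hw i (mem_filter.mp hi).1) hP3).le

theorem one_div_108_le_sum_filter_tails (hw : ∀ i ∈ s, 0 ≤ w i) (h₀ : ∑ i ∈ s, w i = 1)
    {v : ι → ℝ} {μ : ℝ} (h₁ : ∑ i ∈ s, w i * (v i - μ) = 0) {V : ℝ} (hV : 0 < V)
    (h₂ : ∑ i ∈ s, w i * (v i - μ) ^ 2 = V) (h₄ : ∑ i ∈ s, w i * (v i - μ) ^ 4 ≤ 4 * V ^ 2) :
    1 / 108 ≤ ∑ i ∈ s with μ + √V / 5 ≤ v i, w i ∧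
      1 / 108 ≤ ∑ i ∈ s with v i ≤ μ - √V / 5, w i := by
  constructor
  · have h := one_div_108_le_sum_filter_of_fourth_moment_le hw h₀ h₁ hV h₂ h₄
    simpa only [le_sub_iff_add_le'] using h
  · have h₁' : ∑ i ∈ s, w i * (μ - v i) = 0 := by
      rw [← neg_eq_zero, ← sum_neg_distrib, ← h₁]
      exact sum_congr rfl fun i _ => by ring
    have heven {k : ℕ} (hk : Even k) :
        ∑ i ∈ s, w i * (μ - v i) ^ k = ∑ i ∈ s, w i * (v i - μ) ^ k :=
      sum_congr rfl fun i _ => by rw [← neg_sub, hk.neg_pow]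
    have h := one_div_108_le_sum_filter_of_fourth_moment_le hw h₀ h₁' hV
      ((heven even_two).trans h₂) ((heven (by decide)).trans_le h₄)
    simpa only [le_sub_comm] using h

end WeightedSums

noncomputable def binomialWeight (n : ℕ) (p : ℝ) (i : ℕ) : ℝ :=
  n.choose i * p ^ i * (1 - p) ^ (n - i)

section Binomial

variable (n : ℕ) (p : ℝ)

theorem binomialWeight_nonneg (hp₀ : 0 ≤ p) (hp₁ : p ≤ 1) (i : ℕ) :
    0 ≤ binomialWeight n p i := by
  unfold binomialWeight
  have : 0 ≤ 1 - p := sub_nonneg.mpr hp₁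
  positivity

theorem sum_binomialWeight : ∑ i ∈ range (n + 1), binomialWeight n p i = 1 := by
  have h := (add_pow p (1 - p) n).symm
  rw [add_sub_cancel, one_pow] at h
  rw [← h]
  exact sum_congr rfl fun i _ => by rw [binomialWeight]; ring

theorem binomialWeight_succ_mul_descFactorial_succ (m j k : ℕ) :
    binomialWeight (m + 1) p (j + 1) * ((j + 1).descFactorial (k + 1) : ℝ) =
      (m + 1) * p * (binomialWeight m p j * j.descFactorial k) := by
  have habsorb : ((m + 1).choose (j + 1) : ℝ) * (j + 1) = (m + 1) * m.choose j := by
    exact_mod_cast (Nat.add_one_mul_choose_eq m j).symm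
  rw [binomialWeight, binomialWeight, Nat.succ_descFactorial_succ, Nat.add_sub_add_right]
  push_cast
  linear_combination p ^ j * p * (1 - p) ^ (m - j) * j.descFactorial k * habsorb

theorem sum_binomialWeight_mul_descFactorial (k : ℕ) :
    ∑ i ∈ range (n + 1), binomialWeight n p i * (i.descFactorial k : ℝ) =
      n.descFactorial k * p ^ k := by
  induction k generalizing n with
  | zero => simp [sum_binomialWeight]
  | succ k ih =>
    cases n with
    | zero => simp
    | succ m =>
      rw [sum_range_succ', Nat.zero_descFactorial_succ, Nat.cast_zero, mul_zero, add_zero]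
      simp_rw [binomialWeight_succ_mul_descFactorial_succ, ← mul_sum, ih,
        Nat.succ_descFactorial_succ]
      push_cast
      ring

theorem cast_descFactorial_eq_prod_range (i k : ℕ) :
    (i.descFactorial k : ℝ) = ∏ j ∈ range k, ((i : ℝ) - j) :=
  (descPochhammer_eval_eq_descFactorial ℝ i k).symm.trans (descPochhammer_eval_eq_prod_range k _)

theorem sum_binomialWeight_mul_const_mul_descFactorial (k : ℕ) (c : ℝ) :
    ∑ i ∈ range (n + 1), binomialWeight n p i * (c * i.descFactorial k) =
      c * (n.descFactorial k * p ^ k) := by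
  simp_rw [mul_left_comm _ c, ← mul_sum, sum_binomialWeight_mul_descFactorial]

theorem sum_binomialWeight_mul_sub_mean :
    ∑ i ∈ range (n + 1), binomialWeight n p i * ((i : ℝ) - n * p) = 0 := by
  calc ∑ i ∈ range (n + 1), binomialWeight n p i * ((i : ℝ) - n * p)
      = ∑ i ∈ range (n + 1), binomialWeight n p i *
          ((i.descFactorial 1 : ℝ) + -(n * p) * i.descFactorial 0) :=
        sum_congr rfl fun i _ => by
          simp only [cast_descFactorial_eq_prod_range, prod_range_succ, prod_range_zero]; ring
    _ = 0 := by
      simp only [mul_add, sum_add_distrib, sum_binomialWeight_mul_const_mul_descFactorial,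
        sum_binomialWeight_mul_descFactorial]
      simp only [cast_descFactorial_eq_prod_range, prod_range_succ, prod_range_zero]
      ring

theorem sum_binomialWeight_mul_sub_mean_sq :
    ∑ i ∈ range (n + 1), binomialWeight n p i * ((i : ℝ) - n * p) ^ 2 = n * p * (1 - p) := by
  calc ∑ i ∈ range (n + 1), binomialWeight n p i * ((i : ℝ) - n * p) ^ 2
      = ∑ i ∈ range (n + 1), binomialWeight n p i *
          ((i.descFactorial 2 : ℝ) + (1 - 2 * (n * p)) * i.descFactorial 1 +
            (n * p) ^ 2 * i.descFactorial 0) :=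
        sum_congr rfl fun i _ => by
          simp only [cast_descFactorial_eq_prod_range, prod_range_succ, prod_range_zero]; ring
    _ = n * p * (1 - p) := by
      simp only [mul_add, sum_add_distrib, sum_binomialWeight_mul_const_mul_descFactorial,
        sum_binomialWeight_mul_descFactorial]
      simp only [cast_descFactorial_eq_prod_range, prod_range_succ, prod_range_zero]
      ring

theorem sum_binomialWeight_mul_sub_mean_pow_four :
    ∑ i ∈ range (n + 1), binomialWeight n p i * ((i : ℝ) - n * p) ^ 4 =
      3 * (n * p * (1 - p)) ^ 2 + n * p * (1 - p) * (1 - 6 * p * (1 - p)) := by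
  calc ∑ i ∈ range (n + 1), binomialWeight n p i * ((i : ℝ) - n * p) ^ 4
      = ∑ i ∈ range (n + 1), binomialWeight n p i *
          ((i.descFactorial 4 : ℝ) + (6 - 4 * (n * p)) * i.descFactorial 3 +
            (7 - 12 * (n * p) + 6 * (n * p) ^ 2) * i.descFactorial 2 +
            (1 - 4 * (n * p) + 6 * (n * p) ^ 2 - 4 * (n * p) ^ 3) * i.descFactorial 1 +
            (n * p) ^ 4 * i.descFactorial 0) :=
        sum_congr rfl fun i _ => by
          simp only [cast_descFactorial_eq_prod_range, prod_range_succ, prod_range_zero]; ring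
    _ = 3 * (n * p * (1 - p)) ^ 2 + n * p * (1 - p) * (1 - 6 * p * (1 - p)) := by
      simp only [mul_add, sum_add_distrib, sum_binomialWeight_mul_const_mul_descFactorial,
        sum_binomialWeight_mul_descFactorial]
      simp only [cast_descFactorial_eq_prod_range, prod_range_succ, prod_range_zero]
      ring

end Binomial

open Classical in
theorem stmt10 (n : ℕ) (p : ℝ) (hp0 : 0 ≤ p) (hp : p ≤ 1/2)
    (hvar : 1 ≤ (n : ℝ) * p * (1 - p)) :
    (1/108 : ℝ) ≤ ∑ i ∈ Finset.range (n + 1),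
        (if (n : ℝ) * p + Real.sqrt ((n : ℝ) * p * (1 - p)) / 5 ≤ (i : ℝ) then
          (n.choose i : ℝ) * p ^ i * (1 - p) ^ (n - i) else 0) ∧
    (1/108 : ℝ) ≤ ∑ i ∈ Finset.range (n + 1),
        (if (i : ℝ) ≤ (n : ℝ) * p - Real.sqrt ((n : ℝ) * p * (1 - p)) / 5 then
          (n.choose i : ℝ) * p ^ i * (1 - p) ^ (n - i) else 0) := by
  set V := (n : ℝ) * p * (1 - p)
  have hfourth :
      ∑ i ∈ range (n + 1), binomialWeight n p i * ((i : ℝ) - n * p) ^ 4 ≤ 4 * V ^ 2 := by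
    rw [sum_binomialWeight_mul_sub_mean_pow_four]
    nlinarith [mul_nonneg hp0 (by linarith : (0 : ℝ) ≤ 1 - p)]
  have h := one_div_108_le_sum_filter_tails
    (fun i _ => binomialWeight_nonneg n p hp0 (by linarith) i) (sum_binomialWeight n p)
    (sum_binomialWeight_mul_sub_mean n p) (by linarith) (sum_binomialWeight_mul_sub_mean_sq n p)
    hfourth
  simpa only [sum_filter, binomialWeight] using h
end

section
/- Let Hyp(n, m, k) denote the hypergeometric distribution (the number of marked elements when drawing k elements without replacement from an n-element set containing m marked elements) and let Bin(k, p) with p = m/n satisfy kp(1−p) ≥ 1. Then the total variation distance between Hyp(n, m, k) and Bin(k, p) is at most (k−1)/(n−1). -/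
/-!
Stein's method. Let `b` be the law `Bin(k, p)`, `p = m / n`, and `0 ≤ f ≤ 1` a test function. The
function `g` solving `p (k - i) g (i + 1) - (1 - p) i g i = f i - E_b f` has increments bounded by
`1 / ((k + 1) p (1 - p))`: the increment at `x` is `∑ f j w j` for weights `w` that sum to zero
and are nonpositive off `j = x`, and `w x` is controlled by comparing the binomial tails with
`Bin(k + 1, p)`. For the hypergeometric law `h`, the recurrence of its weights turns
`n E_h[p (k - X) g (X + 1) - (1 - p) X g X]` into `E_h[X (k - X) (g (X + 1) - g X)]`, and
`E_h[X (k - X)] = k (k - 1) m (n - m) / (n (n - 1))`. Hence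
`|E_h f - E_b f| ≤ k (k - 1) / ((k + 1) (n - 1)) ≤ (k - 1) / (n - 1)`.
-/

open Finset

lemma cast_choose_succ_mul (n j : ℕ) :
    (n.choose (j + 1) : ℝ) * (j + 1) = n.choose j * (n - j) := by
  rcases le_or_gt j n with h | h
  · have := congrArg (Nat.cast (R := ℝ)) (Nat.choose_succ_right_eq n j)
    push_cast [Nat.cast_sub h] at this
    exact this
  · simp [Nat.choose_eq_zero_of_lt h, Nat.choose_eq_zero_of_lt (h.trans (Nat.lt_succ_self j))]

lemma abs_sum_mul_le_of_nonpos_of_ne {ι : Type*} [DecidableEq ι] {s : Finset ι} {x : ι}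
    (hx : x ∈ s) {f w : ι → ℝ} (hw : ∑ j ∈ s, w j = 0) (hneg : ∀ j ∈ s, j ≠ x → w j ≤ 0)
    (hf0 : ∀ j ∈ s, 0 ≤ f j) (hf1 : ∀ j ∈ s, f j ≤ 1) :
    |∑ j ∈ s, f j * w j| ≤ w x := by
  rw [← add_sum_erase s _ hx] at hw ⊢
  have hrest : ∑ j ∈ s.erase x, w j ≤ ∑ j ∈ s.erase x, f j * w j :=
    sum_le_sum fun j hj => by
      obtain ⟨hjx, hj⟩ := mem_erase.1 hj
      nlinarith [hneg j hj hjx, hf1 j hj]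
  have hrest' : ∑ j ∈ s.erase x, f j * w j ≤ 0 :=
    sum_nonpos fun j hj => by
      obtain ⟨hjx, hj⟩ := mem_erase.1 hj
      exact mul_nonpos_of_nonneg_of_nonpos (hf0 j hj) (hneg j hj hjx)
  have hwx : 0 ≤ w x := by linarith
  rw [abs_le]
  constructor <;> nlinarith [hf0 x hx, hf1 x hx]

section Binomial

variable (k : ℕ) (p : ℝ)

noncomputable def binomWeight (j : ℕ) : ℝ := k.choose j * p ^ j * (1 - p) ^ (k - j)

noncomputable def binomExpect (f : ℕ → ℝ) : ℝ := ∑ j ∈ range (k + 1), binomWeight k p j * f j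

lemma sum_binomWeight : ∑ j ∈ range (k + 1), binomWeight k p j = 1 := by
  have := (add_pow p (1 - p) k).symm
  rw [add_sub_cancel, one_pow] at this
  rw [← this]
  exact sum_congr rfl fun j _ => by unfold binomWeight; ring

lemma one_sub_sum_range_binomWeight {y : ℕ} (hy : y ≤ k + 1) :
    1 - ∑ j ∈ range y, binomWeight k p j = ∑ j ∈ Ico y (k + 1), binomWeight k p j := by
  rw [← sum_binomWeight k p, ← sum_range_add_sum_Ico _ hy, add_sub_cancel_left]

variable {k p}

lemma binomWeight_nonneg (hp0 : 0 ≤ p) (hp1 : p ≤ 1) (j : ℕ) : 0 ≤ binomWeight k p j := by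
  have : 0 ≤ 1 - p := by linarith
  unfold binomWeight
  positivity

lemma binomWeight_pos (hp0 : 0 < p) (hp1 : p < 1) {j : ℕ} (hj : j ≤ k) :
    0 < binomWeight k p j := by
  have := Nat.choose_pos hj
  have : 0 < 1 - p := by linarith
  unfold binomWeight
  positivity

lemma binomWeight_succ_mul {j : ℕ} (hj : j < k) :
    (1 - p) * (j + 1) * binomWeight k p (j + 1) = p * (k - j) * binomWeight k p j := by
  unfold binomWeight
  rw [show k - j = k - (j + 1) + 1 by omega, pow_succ, pow_succ]
  linear_combination (p ^ j * p * (1 - p) ^ (k - (j + 1)) * (1 - p)) * cast_choose_succ_mul k j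

lemma add_one_mul_one_sub_mul_binomWeight {j : ℕ} (hj : j ≤ k) :
    (k + 1) * ((1 - p) * binomWeight k p j) = (k + 1 - j) * binomWeight (k + 1) p j := by
  have := congrArg (Nat.cast (R := ℝ)) (Nat.choose_mul_succ_eq k j)
  push_cast [Nat.cast_sub (hj.trans k.le_succ)] at this
  unfold binomWeight
  rw [show k + 1 - j = k - j + 1 by omega, pow_succ]
  linear_combination (p ^ j * (1 - p) ^ (k - j) * (1 - p)) * this

lemma add_one_mul_mul_binomWeight (j : ℕ) :
    (k + 1) * (p * binomWeight k p j) = (j + 1) * binomWeight (k + 1) p (j + 1) := by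
  have := congrArg (Nat.cast (R := ℝ)) (Nat.add_one_mul_choose_eq k j)
  push_cast at this
  unfold binomWeight
  rw [Nat.add_sub_add_right, pow_succ]
  linear_combination (p ^ j * p * (1 - p) ^ (k - j)) * this

variable (hp0 : 0 ≤ p) (hp1 : p ≤ 1)
include hp0 hp1

lemma binomWeight_succ_mul_le {x j : ℕ} (hxj : x ≤ j) (hj : j < k) :
    (1 - p) * x * binomWeight k p (j + 1) ≤ p * (k - x) * binomWeight k p j := by
  have hxj' : (x : ℝ) ≤ j := by exact_mod_cast hxj
  have hjk : (j : ℝ) + 1 ≤ k := by exact_mod_cast hj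
  have key : (x : ℝ) * (k - j) ≤ (j + 1) * (k - x) := by nlinarith
  have hpb : 0 ≤ p * binomWeight k p j := mul_nonneg hp0 (binomWeight_nonneg hp0 hp1 j)
  refine le_of_mul_le_mul_left ?_ (by positivity : (0 : ℝ) < j + 1)
  calc (j + 1) * ((1 - p) * x * binomWeight k p (j + 1))
      = (x * (k - j)) * (p * binomWeight k p j) := by
        linear_combination (x : ℝ) * binomWeight_succ_mul (p := p) hj
    _ ≤ ((j + 1) * (k - x)) * (p * binomWeight k p j) := mul_le_mul_of_nonneg_right key hpb
    _ = (j + 1) * (p * (k - x) * binomWeight k p j) := by ring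

lemma binomWeight_le_succ_mul {x j : ℕ} (hjx : j < x) (hx : x ≤ k) :
    p * (k - x) * binomWeight k p j ≤ (1 - p) * x * binomWeight k p (j + 1) := by
  have hjx' : (j : ℝ) + 1 ≤ x := by exact_mod_cast hjx
  have hxk : (x : ℝ) ≤ k := by exact_mod_cast hx
  have key : (j + 1) * ((k : ℝ) - x) ≤ x * (k - j) := by nlinarith
  have hpb : 0 ≤ p * binomWeight k p j := mul_nonneg hp0 (binomWeight_nonneg hp0 hp1 j)
  refine le_of_mul_le_mul_left ?_ (by positivity : (0 : ℝ) < j + 1)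
  calc (j + 1) * (p * (k - x) * binomWeight k p j)
      = ((j + 1) * (k - x)) * (p * binomWeight k p j) := by ring
    _ ≤ (x * (k - j)) * (p * binomWeight k p j) := mul_le_mul_of_nonneg_right key hpb
    _ = (j + 1) * ((1 - p) * x * binomWeight k p (j + 1)) := by
        linear_combination -(x : ℝ) * binomWeight_succ_mul (p := p) (hjx.trans_le hx)

lemma binomWeight_upperTail_mul_le {x : ℕ} (hx : x ≤ k) :
    (1 - p) * x * ∑ j ∈ Ico (x + 1) (k + 1), binomWeight k p j
      ≤ p * (k - x) * ∑ j ∈ Ico x (k + 1), binomWeight k p j := by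
  have hkx : (0 : ℝ) ≤ k - x := by simp [hx]
  calc (1 - p) * x * ∑ j ∈ Ico (x + 1) (k + 1), binomWeight k p j
      = ∑ j ∈ Ico x k, (1 - p) * x * binomWeight k p (j + 1) := by
        rw [mul_sum, ← sum_Ico_add' (c := 1)]
    _ ≤ ∑ j ∈ Ico x k, p * (k - x) * binomWeight k p j :=
        sum_le_sum fun j hj => binomWeight_succ_mul_le hp0 hp1 (mem_Ico.1 hj).1 (mem_Ico.1 hj).2
    _ ≤ p * (k - x) * ∑ j ∈ Ico x (k + 1), binomWeight k p j := by
        rw [← mul_sum]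
        exact mul_le_mul_of_nonneg_left
          (sum_le_sum_of_subset_of_nonneg (Ico_subset_Ico_right k.le_succ)
            fun j _ _ => binomWeight_nonneg hp0 hp1 j) (mul_nonneg hp0 hkx)

lemma binomWeight_lowerTail_mul_le {x : ℕ} (hx : x ≤ k) :
    p * (k - x) * ∑ j ∈ range x, binomWeight k p j
      ≤ (1 - p) * x * ∑ j ∈ range (x + 1), binomWeight k p j := by
  calc p * (k - x) * ∑ j ∈ range x, binomWeight k p j
      ≤ ∑ j ∈ range x, (1 - p) * x * binomWeight k p (j + 1) := by
        rw [mul_sum]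
        exact sum_le_sum fun j hj => binomWeight_le_succ_mul hp0 hp1 (mem_range.1 hj) hx
    _ ≤ (1 - p) * x * ∑ j ∈ range (x + 1), binomWeight k p j := by
        rw [sum_range_succ', mul_add, mul_sum]
        have := binomWeight_nonneg hp0 hp1 0 (k := k)
        have : (0 : ℝ) ≤ (1 - p) * x * binomWeight k p 0 := by positivity
        linarith

/-- The rescaled tails are dominated termwise by disjoint pieces of `Bin(k + 1, p)`. -/
lemma binomWeight_tails_div_le {x : ℕ} (hx0 : 0 < x) (hxk : x < k) :
    (1 - p) / (k - x) * ∑ j ∈ Ico (x + 1) (k + 1), binomWeight k p j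
      + p / x * ∑ j ∈ range x, binomWeight k p j ≤ 1 / (k + 1) := by
  have hkx : (0 : ℝ) < k - x := by simp [hxk]
  have hx0' : (0 : ℝ) < x := by exact_mod_cast hx0
  have hk1 : (0 : ℝ) < k + 1 := by positivity
  set b' := binomWeight (k + 1) p
  have hb' := binomWeight_nonneg hp0 hp1 (k := k + 1)
  have hupper : ∀ j ∈ Ico (x + 1) (k + 1),
      (1 - p) / (k - x) * binomWeight k p j ≤ b' j / (k + 1) := by
    intro j hj
    obtain ⟨hxj, hjk⟩ := mem_Ico.1 hj
    have hxj' : (x : ℝ) + 1 ≤ j := by exact_mod_cast hxj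
    have h := add_one_mul_one_sub_mul_binomWeight (p := p) (Nat.lt_succ_iff.1 hjk)
    rw [div_mul_eq_mul_div, div_le_div_iff₀ hkx hk1]
    nlinarith [hb' j]
  have hlower : ∀ j ∈ range x, p / x * binomWeight k p j ≤ b' (j + 1) / (k + 1) := by
    intro j hj
    have hjx : (j : ℝ) + 1 ≤ x := by exact_mod_cast mem_range.1 hj
    have h := add_one_mul_mul_binomWeight (k := k) (p := p) j
    rw [div_mul_eq_mul_div, div_le_div_iff₀ hx0' hk1]
    nlinarith [hb' (j + 1)]
  have hsplit : ∑ j ∈ range (k + 2), b' j = b' 0 + (∑ j ∈ range x, b' (j + 1)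
      + ∑ j ∈ Ico (x + 1) (k + 1), b' j) + b' (k + 1) := by
    rw [← sum_range_add_sum_Ico _ (by omega : x + 1 ≤ k + 2), sum_range_succ',
      sum_Ico_succ_top (by omega : x + 1 ≤ k + 1)]
    ring
  have htotal : ∑ j ∈ range (k + 2), b' j = 1 := sum_binomWeight (k + 1) p
  calc (1 - p) / (k - x) * ∑ j ∈ Ico (x + 1) (k + 1), binomWeight k p j
        + p / x * ∑ j ∈ range x, binomWeight k p j
      ≤ ∑ j ∈ Ico (x + 1) (k + 1), b' j / (k + 1) + ∑ j ∈ range x, b' (j + 1) / (k + 1) := by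
        rw [mul_sum, mul_sum]
        exact add_le_add (sum_le_sum hupper) (sum_le_sum hlower)
    _ ≤ 1 / (k + 1) := by
        rw [← sum_div, ← sum_div, ← add_div]
        gcongr
        linarith [hb' 0, hb' (k + 1)]

end Binomial

section Stein

variable (k : ℕ) (p : ℝ)

noncomputable def steinPartial (f : ℕ → ℝ) (y : ℕ) : ℝ :=
  ∑ j ∈ range y, binomWeight k p j * (f j - binomExpect k p f)

noncomputable def steinSolution (f : ℕ → ℝ) (x : ℕ) : ℝ :=
  steinPartial k p f x / ((1 - p) * x * binomWeight k p x)

noncomputable def covWeight (y j : ℕ) : ℝ :=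
  binomWeight k p j * ((if j ∈ range y then 1 else 0) - ∑ i ∈ range y, binomWeight k p i)

noncomputable def steinIncrementWeight (x j : ℕ) : ℝ :=
  covWeight k p (x + 1) j / (p * (k - x)) - covWeight k p x j / ((1 - p) * x)

variable {k p}

lemma sum_mul_covWeight (f : ℕ → ℝ) {y : ℕ} (hy : y ≤ k + 1) :
    ∑ j ∈ range (k + 1), f j * covWeight k p y j = steinPartial k p f y := by
  have hterm : ∀ j, f j * covWeight k p y j = (if j ∈ range y then binomWeight k p j * f j else 0)
      - (∑ i ∈ range y, binomWeight k p i) * (binomWeight k p j * f j) := by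
    intro j
    unfold covWeight
    split_ifs <;> ring
  have hrange : range (k + 1) ∩ range y = range y := inter_eq_right.2 (range_subset_range.2 hy)
  rw [sum_congr rfl fun j _ => hterm j, sum_sub_distrib, sum_ite_mem, hrange, ← mul_sum,
    steinPartial, binomExpect]
  simp only [mul_sub, sum_sub_distrib, ← sum_mul]

lemma sum_covWeight {y : ℕ} (hy : y ≤ k + 1) : ∑ j ∈ range (k + 1), covWeight k p y j = 0 := by
  have h := sum_mul_covWeight (k := k) (p := p) (fun _ => 1) hy
  simp only [one_mul] at h
  rw [h, steinPartial, binomExpect]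
  simp [sum_binomWeight]

lemma steinPartial_zero (f : ℕ → ℝ) : steinPartial k p f 0 = 0 := by
  simp [steinPartial]

lemma steinPartial_succ_self (f : ℕ → ℝ) : steinPartial k p f (k + 1) = 0 := by
  rw [steinPartial, binomExpect]
  simp only [mul_sub, sum_sub_distrib, ← sum_mul, sum_binomWeight, one_mul, sub_self]

lemma sum_mul_steinIncrementWeight (f : ℕ → ℝ) {x : ℕ} (hxk : x < k) :
    ∑ j ∈ range (k + 1), f j * steinIncrementWeight k p x j
      = steinPartial k p f (x + 1) / (p * (k - x)) - steinPartial k p f x / ((1 - p) * x) := by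
  simp only [steinIncrementWeight, mul_sub, mul_div_assoc', sum_sub_distrib, ← sum_div,
    sum_mul_covWeight f (by omega : x + 1 ≤ k + 1), sum_mul_covWeight f (by omega : x ≤ k + 1)]

lemma sum_steinIncrementWeight {x : ℕ} (hxk : x < k) :
    ∑ j ∈ range (k + 1), steinIncrementWeight k p x j = 0 := by
  simp only [steinIncrementWeight, sum_sub_distrib, ← sum_div,
    sum_covWeight (by omega : x + 1 ≤ k + 1), sum_covWeight (by omega : x ≤ k + 1)]
  simp

variable (hp0 : 0 < p) (hp1 : p < 1)
include hp0 hp1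

lemma mul_steinSolution (f : ℕ → ℝ) {x : ℕ} (hx : x ≤ k) :
    (1 - p) * x * binomWeight k p x * steinSolution k p f x = steinPartial k p f x := by
  rcases Nat.eq_zero_or_pos x with rfl | hx0
  · simp [steinPartial_zero]
  · have : 0 < 1 - p := by linarith
    have := binomWeight_pos hp0 hp1 hx
    exact mul_div_cancel₀ _ (by positivity)

lemma mul_steinSolution_succ (f : ℕ → ℝ) {x : ℕ} (hx : x ≤ k) :
    p * (k - x) * binomWeight k p x * steinSolution k p f (x + 1) = steinPartial k p f (x + 1) := by
  rcases hx.lt_or_eq with hx | rfl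
  · rw [← binomWeight_succ_mul hx, ← mul_steinSolution hp0 hp1 f hx]
    push_cast
    ring
  · simp [steinPartial_succ_self]

lemma steinSolution_spec (f : ℕ → ℝ) {i : ℕ} (hi : i ≤ k) :
    f i - binomExpect k p f
      = p * (k - i) * steinSolution k p f (i + 1) - (1 - p) * i * steinSolution k p f i := by
  refine mul_left_cancel₀ (binomWeight_pos hp0 hp1 hi).ne' ?_
  have hstep : steinPartial k p f (i + 1)
      = steinPartial k p f i + binomWeight k p i * (f i - binomExpect k p f) := sum_range_succ _ _
  linear_combination -hstep - mul_steinSolution_succ hp0 hp1 f hi + mul_steinSolution hp0 hp1 f hi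

lemma steinIncrementWeight_nonpos {x j : ℕ} (hx0 : 0 < x) (hxk : x < k) (hjx : j ≠ x) :
    steinIncrementWeight k p x j ≤ 0 := by
  have hd1 : 0 < p * (k - x) := mul_pos hp0 (by simp [hxk])
  have hd2 : 0 < (1 - p) * x := mul_pos (by linarith) (by exact_mod_cast hx0)
  have hb := binomWeight_nonneg hp0.le hp1.le j (k := k)
  unfold steinIncrementWeight covWeight
  rcases lt_or_gt_of_ne hjx with hlt | hgt
  · rw [if_pos (mem_range.2 (by omega)), if_pos (mem_range.2 hlt),
      one_sub_sum_range_binomWeight k p (by omega : x + 1 ≤ k + 1),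
      one_sub_sum_range_binomWeight k p (by omega : x ≤ k + 1), sub_nonpos, mul_div_assoc,
      mul_div_assoc]
    have := binomWeight_upperTail_mul_le hp0.le hp1.le hxk.le
    exact mul_le_mul_of_nonneg_left ((div_le_div_iff₀ hd1 hd2).2 (by linarith)) hb
  · rw [if_neg (by simp; omega), if_neg (by simp; omega)]
    have := binomWeight_lowerTail_mul_le hp0.le hp1.le hxk.le
    have hcmp : (∑ i ∈ range x, binomWeight k p i) / ((1 - p) * x)
        ≤ (∑ i ∈ range (x + 1), binomWeight k p i) / (p * (k - x)) := by
      rw [div_le_div_iff₀ hd2 hd1]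
      linarith
    calc _ = binomWeight k p j * ((∑ i ∈ range x, binomWeight k p i) / ((1 - p) * x)
          - (∑ i ∈ range (x + 1), binomWeight k p i) / (p * (k - x))) := by ring
      _ ≤ 0 := mul_nonpos_of_nonneg_of_nonpos hb (sub_nonpos.2 hcmp)

lemma steinIncrementWeight_self_le {x : ℕ} (hx0 : 0 < x) (hxk : x < k) :
    steinIncrementWeight k p x x ≤ binomWeight k p x / ((k + 1) * (p * (1 - p))) := by
  have hkx : (k : ℝ) - x ≠ 0 := sub_ne_zero.2 (by exact_mod_cast hxk.ne')
  have hx0' : (x : ℝ) ≠ 0 := by exact_mod_cast hx0.ne'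
  have hq : 1 - p ≠ 0 := by linarith
  have hb := binomWeight_nonneg hp0.le hp1.le x (k := k)
  unfold steinIncrementWeight covWeight
  rw [if_pos (mem_range.2 x.lt_succ_self), if_neg (by simp),
    one_sub_sum_range_binomWeight k p (by omega : x + 1 ≤ k + 1)]
  calc _ = binomWeight k p x * ((1 - p) / (k - x) * ∑ j ∈ Ico (x + 1) (k + 1), binomWeight k p j
          + p / x * ∑ j ∈ range x, binomWeight k p j) / (p * (1 - p)) := by
        field_simp
        ring
    _ ≤ binomWeight k p x * (1 / (k + 1)) / (p * (1 - p)) := by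
        gcongr
        exact binomWeight_tails_div_le hp0.le hp1.le hx0 hxk
    _ = _ := by rw [mul_one_div, div_div]

lemma abs_steinSolution_succ_sub_le {f : ℕ → ℝ} (hf0 : ∀ j ∈ range (k + 1), 0 ≤ f j)
    (hf1 : ∀ j ∈ range (k + 1), f j ≤ 1) {x : ℕ} (hx0 : 0 < x) (hxk : x < k) :
    |steinSolution k p f (x + 1) - steinSolution k p f x| ≤ 1 / ((k + 1) * (p * (1 - p))) := by
  have hb := binomWeight_pos hp0 hp1 hxk.le
  have hkx : (k : ℝ) - x ≠ 0 := sub_ne_zero.2 (by exact_mod_cast hxk.ne')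
  have hx0' : (x : ℝ) ≠ 0 := by exact_mod_cast hx0.ne'
  have hq : 1 - p ≠ 0 := by linarith
  have hrepr : (steinSolution k p f (x + 1) - steinSolution k p f x) * binomWeight k p x
      = ∑ j ∈ range (k + 1), f j * steinIncrementWeight k p x j := by
    rw [sum_mul_steinIncrementWeight f hxk, ← mul_steinSolution hp0 hp1 f hxk.le,
      ← mul_steinSolution_succ hp0 hp1 f hxk.le]
    field_simp
  have hw := abs_sum_mul_le_of_nonpos_of_ne (mem_range.2 (by omega : x < k + 1))
    (sum_steinIncrementWeight (p := p) hxk)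
    (fun _ _ hjx => steinIncrementWeight_nonpos hp0 hp1 hx0 hxk hjx)
    hf0 hf1
  rw [← hrepr, abs_mul, abs_of_pos hb] at hw
  have := hw.trans (steinIncrementWeight_self_le hp0 hp1 hx0 hxk)
  refine le_of_mul_le_mul_right ?_ hb
  linarith [div_eq_mul_one_div (binomWeight k p x) ((k + 1) * (p * (1 - p)))]

lemma abs_sum_mul_steinSolution_increment_le {f : ℕ → ℝ} (hf0 : ∀ j ∈ range (k + 1), 0 ≤ f j)
    (hf1 : ∀ j ∈ range (k + 1), f j ≤ 1) {w : ℕ → ℝ} (hw : ∀ i, 0 ≤ w i) :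
    |∑ i ∈ range (k + 1),
        w i * (i * (k - i) * (steinSolution k p f (i + 1) - steinSolution k p f i))|
      ≤ (∑ i ∈ range (k + 1), w i * (i * (k - i))) / ((k + 1) * (p * (1 - p))) := by
  rw [sum_div]
  refine (abs_sum_le_sum_abs _ _).trans (sum_le_sum fun i hi => ?_)
  have hik : i ≤ k := Nat.lt_succ_iff.1 (mem_range.1 hi)
  have hcoef : 0 ≤ w i * (i * (k - i)) :=
    mul_nonneg (hw i) (mul_nonneg i.cast_nonneg (sub_nonneg.2 (by exact_mod_cast hik)))
  rw [← mul_assoc, abs_mul, abs_of_nonneg hcoef, div_eq_mul_one_div]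
  rcases Nat.eq_zero_or_pos i with rfl | hi0
  · simp
  rcases hik.lt_or_eq with hik | rfl
  · exact mul_le_mul_of_nonneg_left (abs_steinSolution_succ_sub_le hp0 hp1 hf0 hf1 hi0 hik) hcoef
  · simp

end Stein

section Hypergeometric

variable (n m k : ℕ)

noncomputable def hypergeomWeight (i : ℕ) : ℝ :=
  (m.choose i : ℝ) * ((n - m).choose (k - i) : ℝ) / (n.choose k : ℝ)

variable {n m k}

lemma hypergeomWeight_nonneg (i : ℕ) : 0 ≤ hypergeomWeight n m k i := by
  unfold hypergeomWeight
  positivity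

lemma sum_hypergeomWeight (hm : m ≤ n) (hk : k ≤ n) :
    ∑ i ∈ range (k + 1), hypergeomWeight n m k i = 1 := by
  have hvandermonde := Nat.add_choose_eq m (n - m) k
  rw [Nat.add_sub_cancel' hm, Nat.sum_antidiagonal_eq_sum_range_succ_mk] at hvandermonde
  simp only [hypergeomWeight]
  rw [← sum_div, div_eq_one_iff_eq (by exact_mod_cast (Nat.choose_pos hk).ne')]
  exact_mod_cast hvandermonde.symm

lemma hypergeomWeight_succ_mul (hm : m ≤ n) {i : ℕ} (hi : i < k) :
    (m - i) * (k - i) * hypergeomWeight n m k i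
      = (i + 1) * (n - m - k + i + 1) * hypergeomWeight n m k (i + 1) := by
  have hleft := cast_choose_succ_mul m i
  have hright := cast_choose_succ_mul (n - m) (k - (i + 1))
  rw [show k - (i + 1) + 1 = k - i by omega] at hright
  push_cast [Nat.cast_sub hm, Nat.cast_sub hi, Nat.cast_sub (Nat.succ_le_of_lt hi)] at hright
  unfold hypergeomWeight
  rw [← mul_div_assoc, ← mul_div_assoc]
  congr 1
  linear_combination (m.choose i * ((m : ℝ) - i)) * hright
    - ((n - m - k + i + 1 : ℝ) * (n - m).choose (k - (i + 1))) * hleft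

lemma sum_hypergeomWeight_mul_succ (hm : m ≤ n) (g : ℕ → ℝ) :
    ∑ i ∈ range (k + 1), hypergeomWeight n m k i * ((m - i) * (k - i) * g (i + 1))
      = ∑ i ∈ range (k + 1), hypergeomWeight n m k i * (i * (n - m - k + i) * g i) := by
  rw [sum_range_succ, sum_range_succ']
  simp only [sub_self, mul_zero, zero_mul, add_zero, CharP.cast_eq_zero]
  refine sum_congr rfl fun i hi => ?_
  push_cast
  linear_combination g (i + 1) * hypergeomWeight_succ_mul hm (mem_range.1 hi)

lemma hypergeom_stein_identity (hm : m ≤ n) (hn : 0 < n) (g : ℕ → ℝ) :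
    n * ∑ i ∈ range (k + 1), hypergeomWeight n m k i
        * (m / n * (k - i) * g (i + 1) - (1 - m / n) * i * g i)
      = ∑ i ∈ range (k + 1), hypergeomWeight n m k i * (i * (k - i) * (g (i + 1) - g i)) := by
  have hn' : (n : ℝ) ≠ 0 := by exact_mod_cast hn.ne'
  have hterm : ∀ i, n * (hypergeomWeight n m k i
        * (m / n * (k - i) * g (i + 1) - (1 - m / n) * i * g i))
      = hypergeomWeight n m k i * ((m - i) * (k - i) * g (i + 1))
        - hypergeomWeight n m k i * (i * (n - m - k + i) * g i)
        + hypergeomWeight n m k i * (i * (k - i) * (g (i + 1) - g i)) := by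
    intro i
    field_simp
    ring
  rw [mul_sum, sum_congr rfl fun i _ => hterm i, sum_add_distrib, sum_sub_distrib,
    sum_hypergeomWeight_mul_succ hm, sub_self, zero_add]

lemma sum_hypergeomWeight_mul_mul_sub (hm : m ≤ n) (hk : k ≤ n) :
    n * (n - 1) * ∑ i ∈ range (k + 1), hypergeomWeight n m k i * (i * (k - i))
      = k * (k - 1) * m * (n - m) := by
  -- the exchange identity with `g = 1` and `g = id` determines the first two moments
  have hconst := sum_hypergeomWeight_mul_succ (k := k) hm fun _ => 1
  have hlin := sum_hypergeomWeight_mul_succ (k := k) hm fun i => i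
  have hcombo : n * (n - 1) * ∑ i ∈ range (k + 1), hypergeomWeight n m k i * (i * (k - i))
      - k * (k - 1) * m * (n - m) * ∑ i ∈ range (k + 1), hypergeomWeight n m k i
      = (m * k - m - n * k)
          * (∑ i ∈ range (k + 1), hypergeomWeight n m k i * ((m - i) * (k - i) * 1)
            - ∑ i ∈ range (k + 1), hypergeomWeight n m k i * (i * (n - m - k + i) * 1))
        + n * (∑ i ∈ range (k + 1),
              hypergeomWeight n m k i * ((m - i) * (k - i) * ((i + 1 : ℕ) : ℝ))
            - ∑ i ∈ range (k + 1), hypergeomWeight n m k i * (i * (n - m - k + i) * i)) := by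
    simp only [mul_sum, ← sum_sub_distrib, ← sum_add_distrib]
    refine sum_congr rfl fun i _ => ?_
    push_cast
    ring
  rw [hconst, hlin, sub_self, sub_self, sum_hypergeomWeight hm hk] at hcombo
  linarith

end Hypergeometric

lemma abs_sum_hypergeomWeight_sub_binomWeight_mul_le {n m k : ℕ} (hm0 : 0 < m) (hmn : m < n)
    (hk : k ≤ n) {f : ℕ → ℝ} (hf0 : ∀ i ∈ range (k + 1), 0 ≤ f i) (hf1 : ∀ i ∈ range (k + 1), f i ≤ 1) :
    |∑ i ∈ range (k + 1), (hypergeomWeight n m k i - binomWeight k (m / n) i) * f i|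
      ≤ k * (k - 1) / ((k + 1) * (n - 1)) := by
  have hn : (0 : ℝ) < n := by exact_mod_cast hm0.trans hmn
  have hmn' : (m : ℝ) < n := by exact_mod_cast hmn
  have hp0 : 0 < (m : ℝ) / n := by positivity
  have hp1 : (m : ℝ) / n < 1 := (div_lt_one hn).2 hmn'
  have hn1 : (0 : ℝ) < n - 1 := by linarith [(by exact_mod_cast hm0 : (1 : ℝ) ≤ m)]
  have hstein : ∑ i ∈ range (k + 1), (hypergeomWeight n m k i - binomWeight k (m / n) i) * f i
      = ∑ i ∈ range (k + 1), hypergeomWeight n m k i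
          * (m / n * (k - i) * steinSolution k (m / n) f (i + 1)
            - (1 - m / n) * i * steinSolution k (m / n) f i) := by
    calc _ = ∑ i ∈ range (k + 1), hypergeomWeight n m k i * (f i - binomExpect k (m / n) f) := by
          simp only [sub_mul, mul_sub, sum_sub_distrib, ← sum_mul, sum_hypergeomWeight hmn.le hk,
            one_mul, binomExpect]
      _ = _ := sum_congr rfl fun i hi => by
          rw [steinSolution_spec hp0 hp1 f (Nat.lt_succ_iff.1 (mem_range.1 hi))]
  have hbound := abs_sum_mul_steinSolution_increment_le hp0 hp1 hf0 hf1
    (w := hypergeomWeight n m k) hypergeomWeight_nonneg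
  have hmoment : ∑ i ∈ range (k + 1), hypergeomWeight n m k i * (i * (k - i))
      = k * (k - 1) * m * (n - m) / (n * (n - 1)) := by
    rw [eq_div_iff (by positivity)]
    linear_combination sum_hypergeomWeight_mul_mul_sub hmn.le hk
  rw [← hypergeom_stein_identity hmn.le (hm0.trans hmn), ← hstein, abs_mul, abs_of_pos hn,
    hmoment] at hbound
  have hnm : (n : ℝ) - m ≠ 0 := sub_ne_zero.2 hmn'.ne'
  refine le_of_mul_le_mul_left (hbound.trans_eq ?_) hn
  field_simp

lemma sum_eq_sum_mul_indicator {s t : Finset ℕ} {φ : ℕ → ℝ} (hφ : ∀ i ∈ t, i ∉ s → φ i = 0) :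
    ∑ i ∈ t, φ i = ∑ i ∈ s, φ i * (if i ∈ t then 1 else 0) := by
  simp only [mul_ite, mul_one, mul_zero, sum_ite_mem]
  exact (sum_subset inter_subset_right fun i hit his =>
    hφ i hit fun hs => his (mem_inter.2 ⟨hs, hit⟩)).symm

theorem stmt11 (n m k : ℕ) (hm : m ≤ n) (hk : k ≤ n)
    (hvar : 1 ≤ (k : ℝ) * ((m : ℝ) / n) * (1 - (m : ℝ) / n)) :
    ∀ A : Finset ℕ,
      |∑ i ∈ A,
          ((if i ≤ k then ((m.choose i : ℝ) * ((n - m).choose (k - i) : ℝ)) / (n.choose k : ℝ)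
            else 0)
          - (k.choose i : ℝ) * ((m : ℝ) / n) ^ i * (1 - (m : ℝ) / n) ^ (k - i))|
        ≤ ((k : ℝ) - 1) / ((n : ℝ) - 1) := by
  intro A
  have hm0 : 0 < m := Nat.pos_of_ne_zero fun h => by norm_num [h] at hvar
  have hmn : m < n := hm.lt_of_ne fun h => by
    norm_num [h, div_self (by exact_mod_cast (hm0.trans_le h.le).ne' : (n : ℝ) ≠ 0)] at hvar
  have hk0 : 0 < k := Nat.pos_of_ne_zero fun h => by norm_num [h] at hvar
  have hsupport : ∀ i ∈ A, i ∉ range (k + 1) → ((if i ≤ k then hypergeomWeight n m k i else 0)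
      - binomWeight k (m / n) i) = 0 := fun i _ hi => by
    have hki : k < i := by simpa using hi
    simp [binomWeight, Nat.choose_eq_zero_of_lt hki, hki.not_ge]
  change |∑ i ∈ A, ((if i ≤ k then hypergeomWeight n m k i else 0) - binomWeight k (m / n) i)| ≤ _
  rw [sum_eq_sum_mul_indicator hsupport, sum_congr rfl fun i hi => by rw [if_pos (Nat.lt_succ_iff.1 (mem_range.1 hi))]]
  refine (abs_sum_hypergeomWeight_sub_binomWeight_mul_le hm0 hmn hk (fun _ _ => by positivity)
    (fun _ _ => by split_ifs <;> norm_num)).trans ?_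
  have hk1 : (0 : ℝ) ≤ k - 1 := sub_nonneg.2 (by exact_mod_cast hk0)
  have hn1 : (0 : ℝ) < n - 1 := sub_pos.2 (by exact_mod_cast (show 1 < n by omega))
  rw [div_le_div_iff₀ (by positivity) hn1]
  nlinarith
end

section
/- Let T : ℕ → ℕ satisfy T(0) = 0 and suppose there are constants c > 0 and 0 < a < 1 such that for every n > 0 there exists an integer κ with 1 ≤ κ ≤ n^{1−a}/c and T(n) ≤ κ + T(max(0, n − ⌈c·κ·n^a⌉)). Then T(n) = O(n^{1−a}). -/
/-! The potential `Φ(n) = n^{1-a} / (c(1-a))` pays for every round: by concavity of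
`x ↦ x^{1-a}`, removing `c κ n^a` elements from `n` lowers `n^{1-a}` by at least
`c (1-a) κ`, so `Φ` drops by at least `κ` while `T` grows by at most `κ`. -/

open Real

theorem le_of_forall_exists_lt_le_sub_add {T Φ : ℕ → ℝ} (h0 : T 0 ≤ Φ 0)
    (hstep : ∀ n, 0 < n → ∃ m < n, T n ≤ Φ n - Φ m + T m) (n : ℕ) : T n ≤ Φ n := by
  induction n using Nat.strong_induction_on with
  | _ n ih =>
    rcases n.eq_zero_or_pos with rfl | hn
    · exact h0
    obtain ⟨m, hmn, hTn⟩ := hstep n hn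
    linarith [ih m hmn]

/-- Tangent-line bound for the concave map `x ↦ x^{1-a}` at `x`. -/
theorem one_sub_mul_sub_le_rpow_sub_rpow_mul_rpow {a m x : ℝ} (ha0 : 0 ≤ a) (ha1 : a ≤ 1)
    (hm : 0 ≤ m) (hx : 0 ≤ x) :
    (1 - a) * (x - m) ≤ (x ^ (1 - a) - m ^ (1 - a)) * x ^ a := by
  have hx_eq : x ^ (1 - a) * x ^ a = x := by
    rw [← rpow_add' hx (by norm_num), sub_add_cancel, rpow_one]
  have hamgm : m ^ (1 - a) * x ^ a ≤ (1 - a) * m + a * x :=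
    geom_mean_le_arith_mean2_weighted (by linarith) ha0 hm hx (by ring)
  nlinarith

noncomputable def roundPotential (c a : ℝ) (n : ℕ) : ℝ := (c * (1 - a))⁻¹ * (n : ℝ) ^ (1 - a)

theorem le_roundPotential_sub_roundPotential {c a : ℝ} (hc : 0 < c) (ha0 : 0 ≤ a) (ha1 : a < 1)
    {n κ : ℕ} (hκ : (κ : ℝ) ≤ (n : ℝ) ^ (1 - a) / c) :
    (κ : ℝ) ≤ roundPotential c a n - roundPotential c a (n - ⌈c * κ * (n : ℝ) ^ a⌉₊) := by
  set k := ⌈c * κ * (n : ℝ) ^ a⌉₊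
  have hca : 0 < c * (1 - a) := mul_pos hc (by linarith)
  unfold roundPotential
  rw [← mul_sub, inv_mul_eq_div, le_div_iff₀ hca]
  rcases le_or_gt n k with hnk | hkn
  · rw [Nat.sub_eq_zero_of_le hnk, Nat.cast_zero, zero_rpow (by linarith), sub_zero]
    rw [le_div_iff₀ hc] at hκ
    nlinarith [rpow_nonneg (Nat.cast_nonneg n) (1 - a), Nat.cast_nonneg (α := ℝ) κ]
  · have hn : (0 : ℝ) < n := by exact_mod_cast (Nat.zero_le k).trans_lt hkn
    have hceil : c * κ * (n : ℝ) ^ a ≤ n - ((n - k : ℕ) : ℝ) := by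
      rw [Nat.cast_sub hkn.le, sub_sub_cancel]
      exact Nat.le_ceil _
    have htangent := one_sub_mul_sub_le_rpow_sub_rpow_mul_rpow ha0 ha1.le
      (Nat.cast_nonneg (n - k)) hn.le
    refine le_of_mul_le_mul_right ?_ (rpow_pos_of_pos hn a)
    nlinarith

theorem stmt13 (T : ℕ → ℕ) (hT0 : T 0 = 0) (c : ℝ) (hc : 0 < c) (a : ℝ)
    (ha0 : 0 < a) (ha1 : a < 1)
    (hrec : ∀ n : ℕ, 0 < n → ∃ κ : ℕ, 1 ≤ κ ∧ (κ : ℝ) ≤ (n : ℝ) ^ (1 - a) / c ∧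
      T n ≤ κ + T (n - ⌈c * (κ : ℝ) * (n : ℝ) ^ a⌉₊)) :
    ∃ C : ℝ, ∀ n : ℕ, (T n : ℝ) ≤ C * (n : ℝ) ^ (1 - a) := by
  have hstep : ∀ n, 0 < n → ∃ m < n,
      (T n : ℝ) ≤ roundPotential c a n - roundPotential c a m + T m := by
    intro n hn
    obtain ⟨κ, hκ1, hκn, hTn⟩ := hrec n hn
    have hk : 0 < ⌈c * κ * (n : ℝ) ^ a⌉₊ := Nat.ceil_pos.2 (by positivity)
    refine ⟨_, Nat.sub_lt hn hk, ?_⟩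
    have hdrop := le_roundPotential_sub_roundPotential hc ha0.le ha1 hκn
    have hTn' : (T n : ℝ) ≤ κ + T (n - ⌈c * κ * (n : ℝ) ^ a⌉₊) := by exact_mod_cast hTn
    linarith
  have h0 : ((T 0 : ℕ) : ℝ) ≤ roundPotential c a 0 := by
    simp [hT0, roundPotential, zero_rpow (by linarith : (1 - a) ≠ 0)]
  exact ⟨_, le_of_forall_exists_lt_le_sub_add (T := fun n => (T n : ℝ)) h0 hstep⟩
end
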